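/- arXiv:2506.03936 — 2 statements merged into one kernel-verified Lean document; each statement's English description precedes it below -/
import Mathlib

section
/- (Non-metricities of the zeroth-order connection in the Carrollian limit.) Assume the duality relations hold on U, and let φ be a smooth scalar field and k_{μν} a smooth symmetric tensor field with k_{μν} v^ν = 0 at every point. Define X_{μν} := (v^σ ∂_σ k_{μν} + k_{σν} ∂_μ v^σ + k_{μσ} ∂_ν v^σ) + 2φ Θ_{μν} + (1/2) v^σ ( τ_μ (∂_ν τ_σ − ∂_σ τ_ν) + τ_ν (∂_μ τ_σ − ∂_σ τ_μ) ), and Γ₀^α_{μν} := ^{v,τ}Γ^α_{μν} + v^α X_{μν}. Then Γ₀^α_{μν} = Γ₀^α_{νμ} (torsion-free), and the covariant derivatives with respect to Γ₀ satisfy at every point: ∇_μ v^ν = Θ_{μσ} h^{σν}; ∇_α γ_{μν} = −(τ_μ Θ_{να} + τ_ν Θ_{μα}); and (1/2)(∇_μ τ_ν + ∇_ν τ_μ) = − X_{μν}. -/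
/-! Common setup: fields on an open subset `U` of `ℝ⁴`, coordinates indexed by `Fin 4`,
partial derivatives `pd`, covariant derivatives, torsion, the intrinsic objects
`ω`, `Θ`, the compatible connection `^{v,τ}Γ` and the Coriolis field. -/

abbrev Vec4 : Type := Fin 4 → ℝ
abbrev Tens1 : Type := Vec4 → Fin 4 → ℝ
abbrev Tens2 : Type := Vec4 → Fin 4 → Fin 4 → ℝ
abbrev Tens3 : Type := Vec4 → Fin 4 → Fin 4 → Fin 4 → ℝ

/-- μ-th partial derivative -/
noncomputable def pd (μ : Fin 4) (f : Vec4 → ℝ) (x : Vec4) : ℝ :=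
  fderiv ℝ f x (Pi.single μ 1)

/-- ∇_μ τ_ν := ∂_μ τ_ν − Γ^σ_{μν} τ_σ -/
noncomputable def covOne (Γ : Tens3) (τ : Tens1) (x : Vec4) (μ ν : Fin 4) : ℝ :=
  pd μ (fun y => τ y ν) x - ∑ σ, Γ x σ μ ν * τ x σ

/-- ∇_μ v^ν := ∂_μ v^ν + Γ^ν_{μσ} v^σ -/
noncomputable def covVec (Γ : Tens3) (v : Tens1) (x : Vec4) (μ ν : Fin 4) : ℝ :=
  pd μ (fun y => v y ν) x + ∑ σ, Γ x ν μ σ * v x σ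

/-- ∇_α γ_{μν} := ∂_α γ_{μν} − Γ^σ_{αμ} γ_{σν} − Γ^σ_{αν} γ_{μσ} -/
noncomputable def covLow (Γ : Tens3) (γ : Tens2) (x : Vec4) (α μ ν : Fin 4) : ℝ :=
  pd α (fun y => γ y μ ν) x - ∑ σ, Γ x σ α μ * γ x σ ν - ∑ σ, Γ x σ α ν * γ x μ σ

/-- ∇_α h^{μν} := ∂_α h^{μν} + Γ^μ_{ασ} h^{σν} + Γ^ν_{ασ} h^{μσ} -/
noncomputable def covUp (Γ : Tens3) (h : Tens2) (x : Vec4) (α μ ν : Fin 4) : ℝ :=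
  pd α (fun y => h y μ ν) x + ∑ σ, Γ x μ α σ * h x σ ν + ∑ σ, Γ x ν α σ * h x μ σ

/-- Torsion T^α_{μν} := Γ^α_{μν} − Γ^α_{νμ} -/
def torsion (Γ : Tens3) (x : Vec4) (α μ ν : Fin 4) : ℝ :=
  Γ x α μ ν - Γ x α ν μ

/-- ω_{μν} := (1/2)(∂_μ τ_ν − ∂_ν τ_μ) -/
noncomputable def omega2 (τ : Tens1) (x : Vec4) (μ ν : Fin 4) : ℝ :=
  (1/2) * (pd μ (fun y => τ y ν) x - pd ν (fun y => τ y μ) x)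

/-- Θ_{μν} := (1/2)(v^σ ∂_σ γ_{μν} + γ_{σν} ∂_μ v^σ + γ_{μσ} ∂_ν v^σ) -/
noncomputable def theta2 (v : Tens1) (γ : Tens2) (x : Vec4) (μ ν : Fin 4) : ℝ :=
  (1/2) * (∑ σ, v x σ * pd σ (fun y => γ y μ ν) x
    + ∑ σ, γ x σ ν * pd μ (fun y => v y σ) x
    + ∑ σ, γ x μ σ * pd ν (fun y => v y σ) x)

/-- The compatible connection ^{v,τ}Γ^α_{μν} -/
noncomputable def compatConn (v τ : Tens1) (γ h : Tens2) : Tens3 := fun x α μ ν =>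
  ∑ σ, h x α σ * ((1/2) * pd μ (fun y => γ y ν σ) x + (1/2) * pd ν (fun y => γ y μ σ) x
    - (1/2) * pd σ (fun y => γ y μ ν) x)
  + (1/2) * v x α * (pd μ (fun y => τ y ν) x + pd ν (fun y => τ y μ) x)

/-- Coriolis field κ_{μν} := (1/2)(γ_{να} ∇_μ v^α − γ_{μα} ∇_ν v^α) -/
noncomputable def coriolis (Γ : Tens3) (v : Tens1) (γ : Tens2) (x : Vec4) (μ ν : Fin 4) : ℝ :=
  (1/2) * (∑ α, γ x ν α * covVec Γ v x μ α - ∑ α, γ x μ α * covVec Γ v x ν α)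

/-- Smoothness of a rank-1 field on U -/
def Smooth1 (τ : Tens1) (U : Set Vec4) : Prop := ∀ ν, ContDiffOn ℝ (⊤ : ℕ∞) (fun x => τ x ν) U
/-- Smoothness of a rank-2 field on U -/
def Smooth2 (γ : Tens2) (U : Set Vec4) : Prop := ∀ μ ν, ContDiffOn ℝ (⊤ : ℕ∞) (fun x => γ x μ ν) U
/-- Smoothness of connection coefficients on U -/
def Smooth3 (Γ : Tens3) (U : Set Vec4) : Prop := ∀ α μ ν, ContDiffOn ℝ (⊤ : ℕ∞) (fun x => Γ x α μ ν) U

/-- Kronecker delta -/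
def kron (μ ν : Fin 4) : ℝ := if μ = ν then 1 else 0

/-- The duality relations: τ_μ v^μ = 1, h^{μν} τ_ν = 0, γ_{μν} v^ν = 0,
h^{μσ} γ_{σν} = δ^μ_ν − v^μ τ_ν, together with symmetry of γ and h. -/
def DualityOn (τ v : Tens1) (γ h : Tens2) (U : Set Vec4) : Prop :=
  ∀ x ∈ U, (∀ μ ν, γ x μ ν = γ x ν μ) ∧ (∀ μ ν, h x μ ν = h x ν μ) ∧
    (∑ μ, τ x μ * v x μ = 1) ∧
    (∀ μ, ∑ ν, h x μ ν * τ x ν = 0) ∧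
    (∀ μ, ∑ ν, γ x μ ν * v x ν = 0) ∧
    (∀ μ ν, ∑ σ, h x μ σ * γ x σ ν = kron μ ν - v x μ * τ x ν)

/-- `X_{μν} := ℒ_v k_{μν} + 2φ Θ_{μν}
+ (1/2) v^σ (τ_μ (∂_ν τ_σ − ∂_σ τ_ν) + τ_ν (∂_μ τ_σ − ∂_σ τ_μ))`. -/
noncomputable def carLimitX (v τ : Tens1) (γ k : Tens2) (φ : Vec4 → ℝ)
    (x : Vec4) (μ ν : Fin 4) : ℝ :=
  ((∑ σ, v x σ * pd σ (fun y => k y μ ν) x)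
    + (∑ σ, k x σ ν * pd μ (fun y => v y σ) x)
    + (∑ σ, k x μ σ * pd ν (fun y => v y σ) x))
  + 2 * φ x * theta2 v γ x μ ν
  + (1/2) * ∑ σ, v x σ *
      (τ x μ * (pd ν (fun y => τ y σ) x - pd σ (fun y => τ y ν) x)
        + τ x ν * (pd μ (fun y => τ y σ) x - pd σ (fun y => τ y μ) x))

/-- The zeroth-order connection in the Carrollian limit:
`Γ₀^α_{μν} := ^{v,τ}Γ^α_{μν} + v^α X_{μν}`. -/
noncomputable def carLimitConn (v τ : Tens1) (γ h k : Tens2) (φ : Vec4 → ℝ) : Tens3 :=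
  fun x α μ ν => compatConn v τ γ h x α μ ν + v x α * carLimitX v τ γ k φ x μ ν

lemma pd_congr {U : Set Vec4} (hU : IsOpen U) {x : Vec4} (hx : x ∈ U)
    {f g : Vec4 → ℝ} (hfg : ∀ y ∈ U, f y = g y) (μ : Fin 4) :
    pd μ f x = pd μ g x := by
  unfold pd
  congr 1
  apply Filter.EventuallyEq.fderiv_eq
  filter_upwards [hU.mem_nhds hx] with y hy using hfg y hy

lemma pd_const (μ : Fin 4) (c : ℝ) (x : Vec4) : pd μ (fun _ => c) x = 0 := by
  simp [pd]

lemma pd_sum (f : Fin 4 → Vec4 → ℝ) (x : Vec4) (μ : Fin 4)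
    (hf : ∀ i, DifferentiableAt ℝ (f i) x) :
    pd μ (fun y => ∑ i, f i y) x = ∑ i, pd μ (f i) x := by
  unfold pd
  rw [fderiv_fun_sum (fun i _ => hf i)]
  simp

lemma pd_mul {f g : Vec4 → ℝ} {x : Vec4} (hf : DifferentiableAt ℝ f x)
    (hg : DifferentiableAt ℝ g x) (μ : Fin 4) :
    pd μ (fun y => f y * g y) x = pd μ f x * g x + f x * pd μ g x := by
  unfold pd
  rw [fderiv_fun_mul hf hg]
  simp
  ring

lemma smooth_diff {U : Set Vec4} (hU : IsOpen U) {f : Vec4 → ℝ}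
    (hf : ContDiffOn ℝ (⊤ : ℕ∞) f U) {x : Vec4} (hx : x ∈ U) :
    DifferentiableAt ℝ f x :=
  ((hf x hx).contDiffAt (hU.mem_nhds hx)).differentiableAt (by simp)

lemma pd_contract_const {U : Set Vec4} (hU : IsOpen U) {x : Vec4} (hx : x ∈ U)
    (f g : Fin 4 → Vec4 → ℝ) (c : ℝ)
    (hf : ∀ σ, DifferentiableAt ℝ (f σ) x) (hg : ∀ σ, DifferentiableAt ℝ (g σ) x)
    (hrel : ∀ y ∈ U, ∑ σ, f σ y * g σ y = c) (μ : Fin 4) :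
    ∑ σ, (pd μ (f σ) x * g σ x + f σ x * pd μ (g σ) x) = 0 := by
  have h0 : pd μ (fun y => ∑ σ, f σ y * g σ y) x = 0 := by
    rw [pd_congr hU hx (g := fun _ => c) hrel μ, pd_const]
  rw [pd_sum (fun σ y => f σ y * g σ y) x μ (fun σ => (hf σ).mul (hg σ))] at h0
  rw [← h0]
  exact Finset.sum_congr rfl fun σ _ => (pd_mul (hf σ) (hg σ) μ).symm


noncomputable def mTheta (V : Fin 4 → ℝ) (G : Fin 4 → Fin 4 → ℝ) (dV : Fin 4 → Fin 4 → ℝ)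
    (dG : Fin 4 → Fin 4 → Fin 4 → ℝ) (μ ν : Fin 4) : ℝ :=
  (1/2) * (∑ σ, V σ * dG σ μ ν + ∑ σ, G σ ν * dV μ σ + ∑ σ, G μ σ * dV ν σ)

noncomputable def mX (T V : Fin 4 → ℝ) (G K : Fin 4 → Fin 4 → ℝ) (φv : ℝ) (dT dV : Fin 4 → Fin 4 → ℝ)
    (dG dK : Fin 4 → Fin 4 → Fin 4 → ℝ) (μ ν : Fin 4) : ℝ :=
  ((∑ σ, V σ * dK σ μ ν) + (∑ σ, K σ ν * dV μ σ) + (∑ σ, K μ σ * dV ν σ))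
  + 2 * φv * mTheta V G dV dG μ ν
  + (1/2) * ∑ σ, V σ * (T μ * (dT ν σ - dT σ ν) + T ν * (dT μ σ - dT σ μ))

noncomputable def mConn (T V : Fin 4 → ℝ) (G H K : Fin 4 → Fin 4 → ℝ) (φv : ℝ) (dT dV : Fin 4 → Fin 4 → ℝ)
    (dG dK : Fin 4 → Fin 4 → Fin 4 → ℝ) (α μ ν : Fin 4) : ℝ :=
  ∑ σ, H α σ * ((1/2) * dG μ ν σ + (1/2) * dG ν μ σ - (1/2) * dG σ μ ν)
  + (1/2) * V α * (dT μ ν + dT ν μ)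
  + V α * mX T V G K φv dT dV dG dK μ ν

lemma swap_mul (f : Fin 4 → Fin 4 → ℝ) (g : Fin 4 → ℝ) :
    ∑ σ, (∑ ρ, f σ ρ) * g σ = ∑ ρ, ∑ σ, f σ ρ * g σ := by
  simp only [Finset.sum_mul]
  exact Finset.sum_comm

lemma sum_kron (f : Fin 4 → ℝ) (ν : Fin 4) : ∑ σ, f σ * kron ν σ = f ν := by
  simp [kron, mul_ite, mul_one, mul_zero]

theorem master (T V : Fin 4 → ℝ) (G H K : Fin 4 → Fin 4 → ℝ) (φv : ℝ)
    (dT dV : Fin 4 → Fin 4 → ℝ) (dG dK : Fin 4 → Fin 4 → Fin 4 → ℝ)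
    (hGsym : ∀ μ ν, G μ ν = G ν μ)
    (hHsym : ∀ μ ν, H μ ν = H ν μ)
    (hKsym : ∀ μ ν, K μ ν = K ν μ)
    (hdGsym : ∀ α μ ν, dG α μ ν = dG α ν μ)
    (hdKsym : ∀ α μ ν, dK α μ ν = dK α ν μ)
    (hTV : ∑ μ, T μ * V μ = 1)
    (hHT : ∀ μ, ∑ ν, H μ ν * T ν = 0)
    (hGV : ∀ μ, ∑ ν, G μ ν * V ν = 0)
    (hHG : ∀ μ ν, ∑ σ, H μ σ * G σ ν = kron μ ν - V μ * T ν)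
    (hKV : ∀ μ, ∑ ν, K μ ν * V ν = 0)
    (hD1 : ∀ μ, ∑ σ, (dT μ σ * V σ + T σ * dV μ σ) = 0)
    (hD2 : ∀ α μ, ∑ σ, (dG α μ σ * V σ + G μ σ * dV α σ) = 0)
    (hD3 : ∀ α μ, ∑ σ, (dK α μ σ * V σ + K μ σ * dV α σ) = 0) :
    (∀ α μ ν, mConn T V G H K φv dT dV dG dK α μ ν = mConn T V G H K φv dT dV dG dK α ν μ) ∧
    (∀ μ ν, dV μ ν + ∑ σ, mConn T V G H K φv dT dV dG dK ν μ σ * V σ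
      = ∑ σ, mTheta V G dV dG μ σ * H σ ν) ∧
    (∀ α μ ν, dG α μ ν - ∑ σ, mConn T V G H K φv dT dV dG dK σ α μ * G σ ν
        - ∑ σ, mConn T V G H K φv dT dV dG dK σ α ν * G μ σ
      = -(T μ * mTheta V G dV dG ν α + T ν * mTheta V G dV dG μ α)) ∧
    (∀ μ ν, (1/2) * ((dT μ ν - ∑ σ, mConn T V G H K φv dT dV dG dK σ μ ν * T σ)
        + (dT ν μ - ∑ σ, mConn T V G H K φv dT dV dG dK σ ν μ * T σ))
      = -(mX T V G K φv dT dV dG dK μ ν)) := by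
  -- rearranged duality derivatives
  have hD1' : ∀ μ, ∑ σ, T σ * dV μ σ = -∑ σ, dT μ σ * V σ := by
    intro μ
    have h := hD1 μ
    rw [Finset.sum_add_distrib] at h
    linarith
  have hD2' : ∀ α μ, ∑ σ, dG α μ σ * V σ = -∑ σ, G μ σ * dV α σ := by
    intro α μ
    have h := hD2 α μ
    rw [Finset.sum_add_distrib] at h
    linarith
  have hD3' : ∀ α μ, ∑ σ, dK α μ σ * V σ = -∑ σ, K μ σ * dV α σ := by
    intro α μ
    have h := hD3 α μ
    rw [Finset.sum_add_distrib] at h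
    linarith
  have hVG : ∀ ν, ∑ σ, V σ * G σ ν = 0 := by
    intro ν
    have e : ∑ σ, V σ * G σ ν = ∑ σ, G ν σ * V σ :=
      Finset.sum_congr rfl fun σ _ => by rw [hGsym σ ν]; ring
    rw [e, hGV]
  -- Θ symmetry
  have hΘsym : ∀ μ ν, mTheta V G dV dG μ ν = mTheta V G dV dG ν μ := by
    intro μ ν
    unfold mTheta
    have e1 : ∑ σ, V σ * dG σ μ ν = ∑ σ, V σ * dG σ ν μ :=
      Finset.sum_congr rfl fun σ _ => by rw [hdGsym]
    have e2 : ∑ σ, G σ ν * dV μ σ = ∑ σ, G ν σ * dV μ σ :=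
      Finset.sum_congr rfl fun σ _ => by rw [hGsym]
    have e3 : ∑ σ, G μ σ * dV ν σ = ∑ σ, G σ μ * dV ν σ :=
      Finset.sum_congr rfl fun σ _ => by rw [hGsym]
    rw [e1, e2, e3]
    ring
  -- X symmetry
  have hXsym : ∀ μ ν, mX T V G K φv dT dV dG dK μ ν = mX T V G K φv dT dV dG dK ν μ := by
    intro μ ν
    unfold mX
    have e1 : ∑ σ, V σ * dK σ μ ν = ∑ σ, V σ * dK σ ν μ :=
      Finset.sum_congr rfl fun σ _ => by rw [hdKsym]
    have e2 : ∑ σ, K σ ν * dV μ σ = ∑ σ, K ν σ * dV μ σ :=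
      Finset.sum_congr rfl fun σ _ => by rw [hKsym]
    have e3 : ∑ σ, K μ σ * dV ν σ = ∑ σ, K σ μ * dV ν σ :=
      Finset.sum_congr rfl fun σ _ => by rw [hKsym]
    have e4 : ∑ σ, V σ * (T μ * (dT ν σ - dT σ ν) + T ν * (dT μ σ - dT σ μ))
        = ∑ σ, V σ * (T ν * (dT μ σ - dT σ μ) + T μ * (dT ν σ - dT σ ν)) :=
      Finset.sum_congr rfl fun σ _ => by ring
    rw [e1, e2, e3, e4, hΘsym μ ν]
    ring
  -- conclusion 1 : symmetry of the connection
  have c1 : ∀ α μ ν, mConn T V G H K φv dT dV dG dK α μ ν = mConn T V G H K φv dT dV dG dK α ν μ := by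
    intro α μ ν
    unfold mConn
    have e1 : ∑ σ, H α σ * ((1/2) * dG μ ν σ + (1/2) * dG ν μ σ - (1/2) * dG σ μ ν)
        = ∑ σ, H α σ * ((1/2) * dG ν μ σ + (1/2) * dG μ ν σ - (1/2) * dG σ ν μ) :=
      Finset.sum_congr rfl fun σ _ => by rw [hdGsym σ μ ν]; ring
    rw [e1, hXsym μ ν]
    ring
  -- contraction of H with τ
  have hCT : ∀ A : Fin 4 → ℝ, ∑ σ, (∑ ρ, H σ ρ * A ρ) * T σ = 0 := by
    intro A
    rw [swap_mul]
    apply Finset.sum_eq_zero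
    intro ρ _
    have e : ∑ σ, H σ ρ * A ρ * T σ = A ρ * ∑ σ, H ρ σ * T σ := by
      rw [Finset.mul_sum]
      exact Finset.sum_congr rfl fun σ _ => by rw [hHsym ρ σ]; ring
    rw [e, hHT, mul_zero]
  -- connection contracted with τ
  have hConnT : ∀ μ ν, ∑ σ, mConn T V G H K φv dT dV dG dK σ μ ν * T σ
      = (1/2) * (dT μ ν + dT ν μ) + mX T V G K φv dT dV dG dK μ ν := by
    intro μ ν
    have step : ∑ σ, mConn T V G H K φv dT dV dG dK σ μ ν * T σ
        = ∑ σ, (∑ ρ, H σ ρ * ((1/2) * dG μ ν ρ + (1/2) * dG ν μ ρ - (1/2) * dG ρ μ ν)) * T σ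
          + (1/2) * (dT μ ν + dT ν μ) * ∑ σ, T σ * V σ
          + mX T V G K φv dT dV dG dK μ ν * ∑ σ, T σ * V σ := by
      rw [Finset.mul_sum, Finset.mul_sum, ← Finset.sum_add_distrib, ← Finset.sum_add_distrib]
      refine Finset.sum_congr rfl fun σ _ => ?_
      unfold mConn
      ring
    rw [step, hCT, hTV]
    ring
  -- conclusion 4
  have c4 : ∀ μ ν, (1/2) * ((dT μ ν - ∑ σ, mConn T V G H K φv dT dV dG dK σ μ ν * T σ)
        + (dT ν μ - ∑ σ, mConn T V G H K φv dT dV dG dK σ ν μ * T σ))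
      = -(mX T V G K φv dT dV dG dK μ ν) := by
    intro μ ν
    rw [hConnT μ ν, hConnT ν μ, hXsym ν μ]
    ring
  -- Θ contracted with V
  have hΘV : ∀ μ, ∑ σ, mTheta V G dV dG μ σ * V σ = 0 := by
    intro μ
    have step : ∑ σ, mTheta V G dV dG μ σ * V σ
        = (1/2) * (∑ σ, (∑ ρ, V ρ * dG ρ μ σ) * V σ
          + ∑ σ, (∑ ρ, G ρ σ * dV μ ρ) * V σ
          + ∑ σ, (∑ ρ, G μ ρ * dV σ ρ) * V σ) := by
      rw [← Finset.sum_add_distrib, ← Finset.sum_add_distrib, Finset.mul_sum]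
      refine Finset.sum_congr rfl fun σ _ => ?_
      unfold mTheta
      ring
    have e1 : ∑ σ, (∑ ρ, V ρ * dG ρ μ σ) * V σ = ∑ ρ, V ρ * (-∑ σ, G μ σ * dV ρ σ) := by
      rw [swap_mul]
      refine Finset.sum_congr rfl fun ρ _ => ?_
      rw [← hD2' ρ μ, Finset.mul_sum]
      exact Finset.sum_congr rfl fun σ _ => by ring
    have e2 : ∑ σ, (∑ ρ, G ρ σ * dV μ ρ) * V σ = 0 := by
      rw [swap_mul]
      apply Finset.sum_eq_zero
      intro ρ _
      have e : ∑ σ, G ρ σ * dV μ ρ * V σ = dV μ ρ * ∑ σ, G ρ σ * V σ := by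
        rw [Finset.mul_sum]
        exact Finset.sum_congr rfl fun σ _ => by ring
      rw [e, hGV, mul_zero]
    have e3 : ∑ σ, (∑ ρ, G μ ρ * dV σ ρ) * V σ = ∑ ρ, V ρ * (∑ σ, G μ σ * dV ρ σ) :=
      Finset.sum_congr rfl fun σ _ => by ring
    have e13 : ∑ ρ, V ρ * (-∑ σ, G μ σ * dV ρ σ) + ∑ ρ, V ρ * (∑ σ, G μ σ * dV ρ σ) = 0 := by
      rw [← Finset.sum_add_distrib]
      exact Finset.sum_eq_zero fun ρ _ => by ring
    rw [step, e1, e2, e3]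
    linarith
  -- X contracted with V
  have hXV : ∀ μ, ∑ σ, mX T V G K φv dT dV dG dK μ σ * V σ
      = (1/2) * (∑ σ, dT μ σ * V σ - ∑ σ, V σ * dT σ μ) := by
    intro μ
    have step : ∑ σ, mX T V G K φv dT dV dG dK μ σ * V σ
        = ∑ σ, (∑ ρ, V ρ * dK ρ μ σ) * V σ
          + ∑ σ, (∑ ρ, K ρ σ * dV μ ρ) * V σ
          + ∑ σ, (∑ ρ, K μ ρ * dV σ ρ) * V σ
          + 2 * φv * ∑ σ, mTheta V G dV dG μ σ * V σ
          + (1/2) * ∑ σ, (∑ ρ, V ρ * (T μ * (dT σ ρ - dT ρ σ) + T σ * (dT μ ρ - dT ρ μ))) * V σ := by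
      rw [Finset.mul_sum, Finset.mul_sum, ← Finset.sum_add_distrib, ← Finset.sum_add_distrib,
        ← Finset.sum_add_distrib, ← Finset.sum_add_distrib]
      refine Finset.sum_congr rfl fun σ _ => ?_
      unfold mX
      ring
    have e1 : ∑ σ, (∑ ρ, V ρ * dK ρ μ σ) * V σ = ∑ ρ, V ρ * (-∑ σ, K μ σ * dV ρ σ) := by
      rw [swap_mul]
      refine Finset.sum_congr rfl fun ρ _ => ?_
      rw [← hD3' ρ μ, Finset.mul_sum]
      exact Finset.sum_congr rfl fun σ _ => by ring
    have e2 : ∑ σ, (∑ ρ, K ρ σ * dV μ ρ) * V σ = 0 := by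
      rw [swap_mul]
      apply Finset.sum_eq_zero
      intro ρ _
      have e : ∑ σ, K ρ σ * dV μ ρ * V σ = dV μ ρ * ∑ σ, K ρ σ * V σ := by
        rw [Finset.mul_sum]
        exact Finset.sum_congr rfl fun σ _ => by ring
      rw [e, hKV, mul_zero]
    have e3 : ∑ σ, (∑ ρ, K μ ρ * dV σ ρ) * V σ = ∑ ρ, V ρ * (∑ σ, K μ σ * dV ρ σ) :=
      Finset.sum_congr rfl fun σ _ => by ring
    have e13 : ∑ ρ, V ρ * (-∑ σ, K μ σ * dV ρ σ) + ∑ ρ, V ρ * (∑ σ, K μ σ * dV ρ σ) = 0 := by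
      rw [← Finset.sum_add_distrib]
      exact Finset.sum_eq_zero fun ρ _ => by ring
    -- the τ-part
    have e5 : ∑ σ, (∑ ρ, V ρ * (T μ * (dT σ ρ - dT ρ σ) + T σ * (dT μ ρ - dT ρ μ))) * V σ
        = T μ * (∑ σ, ∑ ρ, V σ * V ρ * (dT σ ρ - dT ρ σ))
          + (∑ σ, T σ * V σ) * (∑ ρ, V ρ * (dT μ ρ - dT ρ μ)) := by
      rw [Finset.mul_sum, Finset.sum_mul, ← Finset.sum_add_distrib]
      refine Finset.sum_congr rfl fun σ _ => ?_
      rw [Finset.sum_mul, Finset.mul_sum, Finset.mul_sum, ← Finset.sum_add_distrib]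
      exact Finset.sum_congr rfl fun ρ _ => by ring
    have anti : (∑ σ, ∑ ρ, V σ * V ρ * (dT σ ρ - dT ρ σ)) = 0 := by
      have h1 : (∑ σ, ∑ ρ, V σ * V ρ * (dT σ ρ - dT ρ σ))
          = ∑ σ, ∑ ρ, -(V σ * V ρ * (dT σ ρ - dT ρ σ)) := by
        rw [Finset.sum_comm]
        exact Finset.sum_congr rfl fun ρ _ => Finset.sum_congr rfl fun σ _ => by ring
      simp only [Finset.sum_neg_distrib] at h1
      linarith
    have esplit : ∑ ρ, V ρ * (dT μ ρ - dT ρ μ) = ∑ σ, dT μ σ * V σ - ∑ σ, V σ * dT σ μ := by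
      rw [← Finset.sum_sub_distrib]
      exact Finset.sum_congr rfl fun σ _ => by ring
    rw [step, e1, e2, e3, hΘV, e5, anti, hTV, esplit]
    linarith [e13]
  -- connection contracted with V (upper index free)
  have hConnV : ∀ μ ν, ∑ σ, mConn T V G H K φv dT dV dG dK ν μ σ * V σ
      = ∑ σ, mTheta V G dV dG μ σ * H σ ν - dV μ ν := by
    intro μ ν
    have step : ∑ σ, mConn T V G H K φv dT dV dG dK ν μ σ * V σ
        = ∑ σ, (∑ ρ, H ν ρ * ((1/2) * dG μ σ ρ + (1/2) * dG σ μ ρ - (1/2) * dG ρ μ σ)) * V σ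
          + (1/2) * V ν * (∑ σ, (dT μ σ + dT σ μ) * V σ)
          + V ν * ∑ σ, mX T V G K φv dT dV dG dK μ σ * V σ := by
      rw [Finset.mul_sum, Finset.mul_sum, ← Finset.sum_add_distrib, ← Finset.sum_add_distrib]
      refine Finset.sum_congr rfl fun σ _ => ?_
      unfold mConn
      ring
    -- the H-term
    have hterm : ∑ σ, (∑ ρ, H ν ρ * ((1/2) * dG μ σ ρ + (1/2) * dG σ μ ρ - (1/2) * dG ρ μ σ)) * V σ
        = ∑ ρ, H ν ρ * (mTheta V G dV dG μ ρ - ∑ σ, G σ ρ * dV μ σ) := by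
      rw [swap_mul]
      refine Finset.sum_congr rfl fun ρ _ => ?_
      have inner1 : ∑ σ, dG μ σ ρ * V σ = -∑ σ, G ρ σ * dV μ σ := by
        rw [← hD2' μ ρ]
        exact Finset.sum_congr rfl fun σ _ => by rw [hdGsym μ σ ρ]
      have inner3 : ∑ σ, dG ρ μ σ * V σ = -∑ σ, G μ σ * dV ρ σ := hD2' ρ μ
      have expand : ∑ σ, H ν ρ * ((1/2) * dG μ σ ρ + (1/2) * dG σ μ ρ - (1/2) * dG ρ μ σ) * V σ
          = H ν ρ * ((1/2) * (∑ σ, dG μ σ ρ * V σ) + (1/2) * (∑ σ, V σ * dG σ μ ρ)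
              - (1/2) * (∑ σ, dG ρ μ σ * V σ)) := by
        rw [Finset.mul_sum, Finset.mul_sum, Finset.mul_sum,
          ← Finset.sum_add_distrib, ← Finset.sum_sub_distrib, Finset.mul_sum]
        exact Finset.sum_congr rfl fun σ _ => by ring
      rw [expand, inner1, inner3]
      have gflip : ∑ σ, G ρ σ * dV μ σ = ∑ σ, G σ ρ * dV μ σ :=
        Finset.sum_congr rfl fun σ _ => by rw [hGsym ρ σ]
      rw [gflip]
      unfold mTheta
      ring
    have hsplit : ∑ ρ, H ν ρ * (mTheta V G dV dG μ ρ - ∑ σ, G σ ρ * dV μ σ)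
        = ∑ ρ, mTheta V G dV dG μ ρ * H ρ ν - ∑ ρ, H ν ρ * ∑ σ, G σ ρ * dV μ σ := by
      rw [← Finset.sum_sub_distrib]
      exact Finset.sum_congr rfl fun ρ _ => by rw [hHsym ν ρ]; ring
    have hh2 : ∑ ρ, H ν ρ * ∑ σ, G σ ρ * dV μ σ = dV μ ν - V ν * ∑ σ, T σ * dV μ σ := by
      have sw : ∑ ρ, H ν ρ * ∑ σ, G σ ρ * dV μ σ = ∑ σ, dV μ σ * ∑ ρ, H ν ρ * G ρ σ := by
        simp only [Finset.mul_sum]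
        rw [Finset.sum_comm]
        refine Finset.sum_congr rfl fun σ _ => Finset.sum_congr rfl fun ρ _ => ?_
        rw [hGsym σ ρ]; ring
      rw [sw]
      have : ∑ σ, dV μ σ * ∑ ρ, H ν ρ * G ρ σ = ∑ σ, dV μ σ * (kron ν σ - V ν * T σ) :=
        Finset.sum_congr rfl fun σ _ => by rw [hHG ν σ]
      rw [this]
      have : ∑ σ, dV μ σ * (kron ν σ - V ν * T σ)
          = ∑ σ, dV μ σ * kron ν σ - V ν * ∑ σ, T σ * dV μ σ := by
        rw [Finset.mul_sum, ← Finset.sum_sub_distrib]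
        exact Finset.sum_congr rfl fun σ _ => by ring
      rw [this, sum_kron]
    have hfix : ∑ σ, mTheta V G dV dG μ σ * H σ ν = ∑ ρ, mTheta V G dV dG μ ρ * H ρ ν := rfl
    have tsplit : ∑ σ, (dT μ σ + dT σ μ) * V σ
        = ∑ σ, dT μ σ * V σ + ∑ σ, V σ * dT σ μ := by
      rw [← Finset.sum_add_distrib]
      exact Finset.sum_congr rfl fun σ _ => by ring
    rw [step, hterm, hsplit, hh2, hXV μ, hD1' μ, tsplit, hfix]
    ring
  -- conclusion 2
  have c2 : ∀ μ ν, dV μ ν + ∑ σ, mConn T V G H K φv dT dV dG dK ν μ σ * V σ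
      = ∑ σ, mTheta V G dV dG μ σ * H σ ν := by
    intro μ ν
    rw [hConnV μ ν]
    ring
  -- connection contracted with G
  have hConnG : ∀ α μ ν, ∑ σ, mConn T V G H K φv dT dV dG dK σ α μ * G σ ν
      = (1/2) * dG α μ ν + (1/2) * dG μ α ν - (1/2) * dG ν α μ + T ν * mTheta V G dV dG α μ := by
    intro α μ ν
    have step : ∑ σ, mConn T V G H K φv dT dV dG dK σ α μ * G σ ν
        = ∑ σ, (∑ ρ, H σ ρ * ((1/2) * dG α μ ρ + (1/2) * dG μ α ρ - (1/2) * dG ρ α μ)) * G σ ν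
          + (1/2) * (dT α μ + dT μ α) * ∑ σ, V σ * G σ ν
          + mX T V G K φv dT dV dG dK α μ * ∑ σ, V σ * G σ ν := by
      rw [Finset.mul_sum, Finset.mul_sum, ← Finset.sum_add_distrib, ← Finset.sum_add_distrib]
      refine Finset.sum_congr rfl fun σ _ => ?_
      unfold mConn
      ring
    have hterm : ∑ σ, (∑ ρ, H σ ρ * ((1/2) * dG α μ ρ + (1/2) * dG μ α ρ - (1/2) * dG ρ α μ)) * G σ ν
        = ∑ ρ, ((1/2) * dG α μ ρ + (1/2) * dG μ α ρ - (1/2) * dG ρ α μ) * (kron ρ ν - V ρ * T ν) := by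
      rw [swap_mul]
      refine Finset.sum_congr rfl fun ρ _ => ?_
      have e : ∑ σ, H σ ρ * ((1/2) * dG α μ ρ + (1/2) * dG μ α ρ - (1/2) * dG ρ α μ) * G σ ν
          = ((1/2) * dG α μ ρ + (1/2) * dG μ α ρ - (1/2) * dG ρ α μ) * ∑ σ, H ρ σ * G σ ν := by
        rw [Finset.mul_sum]
        refine Finset.sum_congr rfl fun σ _ => by rw [hHsym ρ σ]; ring
      rw [e, hHG ρ ν]
    have hsplit : ∑ ρ, ((1/2) * dG α μ ρ + (1/2) * dG μ α ρ - (1/2) * dG ρ α μ) * (kron ρ ν - V ρ * T ν)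
        = ∑ ρ, ((1/2) * dG α μ ρ + (1/2) * dG μ α ρ - (1/2) * dG ρ α μ) * kron ν ρ
          - T ν * ∑ ρ, ((1/2) * (dG α μ ρ * V ρ) + (1/2) * (dG μ α ρ * V ρ) - (1/2) * (V ρ * dG ρ α μ)) := by
      rw [Finset.mul_sum, ← Finset.sum_sub_distrib]
      refine Finset.sum_congr rfl fun ρ _ => ?_
      have : kron ρ ν = kron ν ρ := by unfold kron; simp [eq_comm]
      rw [this]
      ring
    have hk : ∑ ρ, ((1/2) * dG α μ ρ + (1/2) * dG μ α ρ - (1/2) * dG ρ α μ) * kron ν ρ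
        = (1/2) * dG α μ ν + (1/2) * dG μ α ν - (1/2) * dG ν α μ := sum_kron _ ν
    have hv : ∑ ρ, ((1/2) * (dG α μ ρ * V ρ) + (1/2) * (dG μ α ρ * V ρ) - (1/2) * (V ρ * dG ρ α μ))
        = -mTheta V G dV dG α μ := by
      have s1 : ∑ ρ, ((1/2) * (dG α μ ρ * V ρ) + (1/2) * (dG μ α ρ * V ρ) - (1/2) * (V ρ * dG ρ α μ))
          = (1/2) * (∑ ρ, dG α μ ρ * V ρ) + (1/2) * (∑ ρ, dG μ α ρ * V ρ)
            - (1/2) * (∑ ρ, V ρ * dG ρ α μ) := by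
        rw [Finset.mul_sum, Finset.mul_sum, Finset.mul_sum, ← Finset.sum_add_distrib,
          ← Finset.sum_sub_distrib]
      rw [s1, hD2' α μ, hD2' μ α]
      have gflip : ∑ σ, G σ μ * dV α σ = ∑ σ, G μ σ * dV α σ :=
        Finset.sum_congr rfl fun σ _ => by rw [hGsym σ μ]
      unfold mTheta
      rw [← gflip]
      ring
    rw [step, hterm, hsplit, hk, hv, hVG]
    ring
  have c3 : ∀ α μ ν, dG α μ ν - ∑ σ, mConn T V G H K φv dT dV dG dK σ α μ * G σ ν
        - ∑ σ, mConn T V G H K φv dT dV dG dK σ α ν * G μ σ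
      = -(T μ * mTheta V G dV dG ν α + T ν * mTheta V G dV dG μ α) := by
    intro α μ ν
    have flip : ∑ σ, mConn T V G H K φv dT dV dG dK σ α ν * G μ σ
        = ∑ σ, mConn T V G H K φv dT dV dG dK σ α ν * G σ μ :=
      Finset.sum_congr rfl fun σ _ => by rw [hGsym μ σ]
    rw [flip, hConnG α μ ν, hConnG α ν μ, hΘsym ν α, hΘsym μ α,
      hdGsym α ν μ, hdGsym μ α ν, hdGsym ν α μ]
    ring
  exact ⟨c1, c2, c3, c4⟩

/-- Non-metricities of the zeroth-order connection in the Carrollian limit: `Γ₀` is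
torsion-free, `∇_μ v^ν = Θ_{μσ} h^{σν}`, `∇_α γ_{μν} = −(τ_μ Θ_{να} + τ_ν Θ_{μα})`, and
`(1/2)(∇_μ τ_ν + ∇_ν τ_μ) = −X_{μν}`. -/
theorem carrollian_limit_zeroth_order_nonmetricity
    (U : Set Vec4) (hU : IsOpen U) (hne : U.Nonempty)
    (τ v : Tens1) (γ h k : Tens2) (φ : Vec4 → ℝ)
    (hτs : Smooth1 τ U) (hvs : Smooth1 v U) (hγs : Smooth2 γ U) (hhs : Smooth2 h U)
    (hks : Smooth2 k U) (hφs : ContDiffOn ℝ (⊤ : ℕ∞) φ U)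
    (hdual : DualityOn τ v γ h U)
    (hksym : ∀ x ∈ U, ∀ μ ν, k x μ ν = k x ν μ)
    (hkv : ∀ x ∈ U, ∀ μ, ∑ ν, k x μ ν * v x ν = 0) :
    ∀ x ∈ U,
      (∀ α μ ν, carLimitConn v τ γ h k φ x α μ ν = carLimitConn v τ γ h k φ x α ν μ) ∧
      (∀ μ ν, covVec (carLimitConn v τ γ h k φ) v x μ ν
        = ∑ σ, theta2 v γ x μ σ * h x σ ν) ∧
      (∀ α μ ν, covLow (carLimitConn v τ γ h k φ) γ x α μ ν
        = -(τ x μ * theta2 v γ x ν α + τ x ν * theta2 v γ x μ α)) ∧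
      (∀ μ ν, (1/2) * (covOne (carLimitConn v τ γ h k φ) τ x μ ν
          + covOne (carLimitConn v τ γ h k φ) τ x ν μ)
        = -carLimitX v τ γ k φ x μ ν) := by
  intro x hx
  obtain ⟨hGsym, hHsym, hTV, hHT, hGV, hHG⟩ := hdual x hx
  have dτ : ∀ σ, DifferentiableAt ℝ (fun y => τ y σ) x := fun σ => smooth_diff hU (hτs σ) hx
  have dv : ∀ σ, DifferentiableAt ℝ (fun y => v y σ) x := fun σ => smooth_diff hU (hvs σ) hx
  have dγ : ∀ μ ν, DifferentiableAt ℝ (fun y => γ y μ ν) x :=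
    fun μ ν => smooth_diff hU (hγs μ ν) hx
  have dk : ∀ μ ν, DifferentiableAt ℝ (fun y => k y μ ν) x :=
    fun μ ν => smooth_diff hU (hks μ ν) hx
  have hdGsym : ∀ α μ ν, pd α (fun y => γ y μ ν) x = pd α (fun y => γ y ν μ) x :=
    fun α μ ν => pd_congr hU hx (fun y hy => (hdual y hy).1 μ ν) α
  have hdKsym : ∀ α μ ν, pd α (fun y => k y μ ν) x = pd α (fun y => k y ν μ) x :=
    fun α μ ν => pd_congr hU hx (fun y hy => hksym y hy μ ν) α
  have hD1 : ∀ μ, ∑ σ, (pd μ (fun y => τ y σ) x * v x σ + τ x σ * pd μ (fun y => v y σ) x) = 0 :=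
    fun μ => pd_contract_const hU hx (fun σ y => τ y σ) (fun σ y => v y σ) 1 dτ dv
      (fun y hy => (hdual y hy).2.2.1) μ
  have hD2 : ∀ α μ, ∑ σ, (pd α (fun y => γ y μ σ) x * v x σ
      + γ x μ σ * pd α (fun y => v y σ) x) = 0 :=
    fun α μ => pd_contract_const hU hx (fun σ y => γ y μ σ) (fun σ y => v y σ) 0
      (fun σ => dγ μ σ) dv (fun y hy => (hdual y hy).2.2.2.2.1 μ) α
  have hD3 : ∀ α μ, ∑ σ, (pd α (fun y => k y μ σ) x * v x σ
      + k x μ σ * pd α (fun y => v y σ) x) = 0 :=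
    fun α μ => pd_contract_const hU hx (fun σ y => k y μ σ) (fun σ y => v y σ) 0
      (fun σ => dk μ σ) dv (fun y hy => hkv y hy μ) α
  obtain ⟨m1, m2, m3, m4⟩ := master (fun σ => τ x σ) (fun σ => v x σ)
    (fun μ ν => γ x μ ν) (fun μ ν => h x μ ν) (fun μ ν => k x μ ν) (φ x)
    (fun μ ν => pd μ (fun y => τ y ν) x) (fun μ ν => pd μ (fun y => v y ν) x)
    (fun α μ ν => pd α (fun y => γ y μ ν) x) (fun α μ ν => pd α (fun y => k y μ ν) x)
    hGsym hHsym (hksym x hx) hdGsym hdKsym hTV hHT hGV hHG (hkv x hx) hD1 hD2 hD3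
  refine ⟨?_, ?_, ?_, ?_⟩
  · intro α μ ν
    have hm := m1 α μ ν
    simp only [mConn, mX, mTheta] at hm
    simp only [carLimitConn, compatConn, carLimitX, theta2]
    linear_combination hm
  · intro μ ν
    have hm := m2 μ ν
    simp only [mConn, mX, mTheta] at hm
    simp only [covVec, carLimitConn, compatConn, carLimitX, theta2]
    linear_combination hm
  · intro α μ ν
    have hm := m3 α μ ν
    simp only [mConn, mX, mTheta] at hm
    simp only [covLow, carLimitConn, compatConn, carLimitX, theta2]
    linear_combination hm
  · intro μ ν
    have hm := m4 μ ν
    simp only [mConn, mX, mTheta] at hm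
    simp only [covOne, carLimitConn, compatConn, carLimitX, theta2]
    linear_combination hm
end

section
/- (Collineation properties of a connection compatible with both a Galilean and a Carrollian structure.) Let Γ be a torsion-free affine connection on U (Γ^α_{μν} = Γ^α_{νμ}) such that at every point ∇_μ τ_ν = 0, ∇_α h^{μν} = 0, ∇_μ v^ν = 0, and ∇_α γ_{μν} = 0. Then at every point of U: (i) (ℒ_v τ)_μ := v^σ ∂_σ τ_μ + τ_σ ∂_μ v^σ = 0; (ii) (ℒ_v h)^{μν} := v^σ ∂_σ h^{μν} − h^{σν} ∂_σ v^μ − h^{μσ} ∂_σ v^ν = 0; (iii) (ℒ_v γ)_{μν} := v^σ ∂_σ γ_{μν} + γ_{σν} ∂_μ v^σ + γ_{μσ} ∂_ν v^σ = 0 (equivalently Θ_{μν} = 0); (iv) ∂_μ τ_ν − ∂_ν τ_μ = 0 (equivalently ω_{μν} = 0); and (v) if U is connected, the scalar function τ_μ v^μ is constant on U. -/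

private lemma collin_anti_sum (P : Fin 4 → Fin 4 → ℝ) (h : ∀ p q, P p q = - P q p) :
    (∑ p, ∑ q, P p q) = 0 := by
  have key : (∑ p, ∑ q, P p q) = - ∑ p, ∑ q, P p q := by
    calc (∑ p, ∑ q, P p q) = ∑ q, ∑ p, P p q := Finset.sum_comm
    _ = ∑ q, ∑ p, (- P q p) :=
      Finset.sum_congr rfl fun q _ => Finset.sum_congr rfl fun p _ => h p q
    _ = - ∑ q, ∑ p, P q p := by simp
  linarith

/-- Collineation properties of a torsion-free connection compatible with both a Galilean
structure `(τ, h)` and a Carrollian structure `(v, γ)`: `ℒ_v τ = 0`, `ℒ_v h = 0`,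
`ℒ_v γ = 0` (i.e. Θ = 0), `dτ = 0` (i.e. ω = 0), and if `U` is connected the scalar
`τ_μ v^μ` is constant on `U`. -/
theorem doubly_compatible_connection_collineations
    (U : Set Vec4) (hU : IsOpen U) (hne : U.Nonempty)
    (τ v : Tens1) (γ h : Tens2) (Γ : Tens3)
    (hτs : Smooth1 τ U) (hvs : Smooth1 v U) (hγs : Smooth2 γ U) (hhs : Smooth2 h U)
    (hΓs : Smooth3 Γ U)
    (hΓsym : ∀ x ∈ U, ∀ α μ ν, Γ x α μ ν = Γ x α ν μ)
    (hmetτ : ∀ x ∈ U, ∀ μ ν, covOne Γ τ x μ ν = 0)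
    (hmeth : ∀ x ∈ U, ∀ α μ ν, covUp Γ h x α μ ν = 0)
    (hmetv : ∀ x ∈ U, ∀ μ ν, covVec Γ v x μ ν = 0)
    (hmetγ : ∀ x ∈ U, ∀ α μ ν, covLow Γ γ x α μ ν = 0) :
    (∀ x ∈ U,
      (∀ μ, (∑ σ, v x σ * pd σ (fun y => τ y μ) x)
          + (∑ σ, τ x σ * pd μ (fun y => v y σ) x) = 0) ∧
      (∀ μ ν, (∑ σ, v x σ * pd σ (fun y => h y μ ν) x)
          - (∑ σ, h x σ ν * pd σ (fun y => v y μ) x)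
          - (∑ σ, h x μ σ * pd σ (fun y => v y ν) x) = 0) ∧
      (∀ μ ν, (∑ σ, v x σ * pd σ (fun y => γ y μ ν) x)
          + (∑ σ, γ x σ ν * pd μ (fun y => v y σ) x)
          + (∑ σ, γ x μ σ * pd ν (fun y => v y σ) x) = 0) ∧
      (∀ μ ν, pd μ (fun y => τ y ν) x - pd ν (fun y => τ y μ) x = 0)) ∧
    (IsConnected U →
      ∀ x ∈ U, ∀ y ∈ U, ∑ μ, τ x μ * v x μ = ∑ μ, τ y μ * v y μ) := by
  classical
  have pdτ : ∀ x ∈ U, ∀ a b, pd a (fun y => τ y b) x = ∑ s, Γ x s a b * τ x s := by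
    intro x hx a b; have := hmetτ x hx a b; unfold covOne at this; linarith
  have pdv : ∀ x ∈ U, ∀ a b, pd a (fun y => v y b) x = -∑ s, Γ x b a s * v x s := by
    intro x hx a b; have := hmetv x hx a b; unfold covVec at this; linarith
  have pdγ : ∀ x ∈ U, ∀ a m n, pd a (fun y => γ y m n) x
      = ∑ s, Γ x s a m * γ x s n + ∑ s, Γ x s a n * γ x m s := by
    intro x hx a m n; have := hmetγ x hx a m n; unfold covLow at this; linarith
  have pdh : ∀ x ∈ U, ∀ a m n, pd a (fun y => h y m n) x
      = -∑ s, Γ x m a s * h x s n - ∑ s, Γ x n a s * h x m s := by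
    intro x hx a m n; have := hmeth x hx a m n; unfold covUp at this; linarith
  constructor
  · intro x hx
    have hsym := hΓsym x hx
    refine ⟨?_, ?_, ?_, ?_⟩
    · intro μ
      have e : ∀ σ : Fin 4, v x σ * pd σ (fun y => τ y μ) x + τ x σ * pd μ (fun y => v y σ) x
          = ∑ s, (v x σ * (Γ x s σ μ * τ x s) - τ x σ * (Γ x σ μ s * v x s)) := by
        intro σ
        rw [pdτ x hx σ μ, pdv x hx μ σ]
        simp [Finset.mul_sum, Finset.sum_sub_distrib, mul_neg]; ring
      rw [← Finset.sum_add_distrib, Finset.sum_congr rfl (fun σ _ => e σ)]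
      exact collin_anti_sum _ (fun p q => by rw [hsym q p μ, hsym p μ q]; ring)
    · intro μ ν
      have e : ∀ σ : Fin 4, v x σ * pd σ (fun y => h y μ ν) x
            - h x σ ν * pd σ (fun y => v y μ) x - h x μ σ * pd σ (fun y => v y ν) x
          = ∑ s, (h x σ ν * (Γ x μ σ s * v x s) + h x μ σ * (Γ x ν σ s * v x s)
              - v x σ * (Γ x μ σ s * h x s ν) - v x σ * (Γ x ν σ s * h x μ s)) := by
        intro σ
        rw [pdh x hx σ μ ν, pdv x hx σ μ, pdv x hx σ ν]
        simp [Finset.mul_sum, Finset.sum_sub_distrib, Finset.sum_add_distrib,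
          mul_neg, mul_sub, mul_add]
        ring
      rw [show (∑ σ, v x σ * pd σ (fun y => h y μ ν) x)
            - (∑ σ, h x σ ν * pd σ (fun y => v y μ) x)
            - (∑ σ, h x μ σ * pd σ (fun y => v y ν) x)
          = ∑ σ, (v x σ * pd σ (fun y => h y μ ν) x
            - h x σ ν * pd σ (fun y => v y μ) x - h x μ σ * pd σ (fun y => v y ν) x) by
        rw [Finset.sum_sub_distrib, Finset.sum_sub_distrib]]
      rw [Finset.sum_congr rfl (fun σ _ => e σ)]
      exact collin_anti_sum _ (fun p q => by rw [hsym μ p q, hsym ν p q]; ring)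
    · intro μ ν
      have e : ∀ σ : Fin 4, v x σ * pd σ (fun y => γ y μ ν) x
            + γ x σ ν * pd μ (fun y => v y σ) x + γ x μ σ * pd ν (fun y => v y σ) x
          = ∑ s, (v x σ * (Γ x s σ μ * γ x s ν) + v x σ * (Γ x s σ ν * γ x μ s)
              - γ x σ ν * (Γ x σ μ s * v x s) - γ x μ σ * (Γ x σ ν s * v x s)) := by
        intro σ
        rw [pdγ x hx σ μ ν, pdv x hx μ σ, pdv x hx ν σ]
        simp [Finset.mul_sum, Finset.sum_sub_distrib, Finset.sum_add_distrib,
          mul_neg, mul_sub, mul_add]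
        ring
      rw [show (∑ σ, v x σ * pd σ (fun y => γ y μ ν) x)
            + (∑ σ, γ x σ ν * pd μ (fun y => v y σ) x)
            + (∑ σ, γ x μ σ * pd ν (fun y => v y σ) x)
          = ∑ σ, (v x σ * pd σ (fun y => γ y μ ν) x
            + γ x σ ν * pd μ (fun y => v y σ) x + γ x μ σ * pd ν (fun y => v y σ) x) by
        rw [Finset.sum_add_distrib, Finset.sum_add_distrib]]
      rw [Finset.sum_congr rfl (fun σ _ => e σ)]
      exact collin_anti_sum _ (fun p q => by
        rw [hsym q p μ, hsym q p ν, hsym p μ q, hsym p ν q]; ring)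
    · intro μ ν
      rw [pdτ x hx μ ν, pdτ x hx ν μ, sub_eq_zero]
      exact Finset.sum_congr rfl fun s _ => by rw [hsym s μ ν]
  · -- constancy of τ_μ v^μ on connected U
    intro hconn x hx y hy
    set f : Vec4 → ℝ := fun z => ∑ σ, τ z σ * v z σ with hf
    have hfd : ∀ z ∈ U, HasFDerivAt f
        (∑ σ, (τ z σ • fderiv ℝ (fun y => v y σ) z + v z σ • fderiv ℝ (fun y => τ y σ) z)) z := by
      intro z hz
      apply HasFDerivAt.fun_sum
      intro σ _
      have hτd : DifferentiableAt ℝ (fun y => τ y σ) z :=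
        ((hτs σ).contDiffAt (hU.mem_nhds hz)).differentiableAt (by simp)
      have hvd : DifferentiableAt ℝ (fun y => v y σ) z :=
        ((hvs σ).contDiffAt (hU.mem_nhds hz)).differentiableAt (by simp)
      exact hτd.hasFDerivAt.mul hvd.hasFDerivAt
    have pdsum0 : ∀ z ∈ U, ∀ μ,
        (∑ σ, (τ z σ * pd μ (fun y => v y σ) z + v z σ * pd μ (fun y => τ y σ) z)) = 0 := by
      intro z hz μ
      have e : ∀ σ : Fin 4, τ z σ * pd μ (fun y => v y σ) z + v z σ * pd μ (fun y => τ y σ) z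
          = ∑ s, (v z σ * (Γ z s μ σ * τ z s) - τ z σ * (Γ z σ μ s * v z s)) := by
        intro σ
        rw [pdτ z hz μ σ, pdv z hz μ σ]
        simp [Finset.mul_sum, Finset.sum_sub_distrib, mul_neg]; ring
      rw [Finset.sum_congr rfl (fun σ _ => e σ)]
      exact collin_anti_sum _ (fun p q => by ring)
    have fz : ∀ z ∈ U, fderiv ℝ f z = 0 := by
      intro z hz
      rw [(hfd z hz).fderiv]
      ext w
      have hw : w = ∑ μ, w μ • (Pi.single μ 1 : Vec4) := by
        funext j
        simp [Pi.single_apply, Finset.sum_apply, mul_comm]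
      have hL : ∀ μ : Fin 4,
          (∑ σ, (τ z σ • fderiv ℝ (fun y => v y σ) z + v z σ • fderiv ℝ (fun y => τ y σ) z))
            (Pi.single μ 1) = 0 := by
        intro μ
        rw [ContinuousLinearMap.sum_apply]
        simp only [ContinuousLinearMap.add_apply, ContinuousLinearMap.coe_smul',
          Pi.smul_apply, smul_eq_mul]
        simpa [pd] using pdsum0 z hz μ
      calc (∑ σ, (τ z σ • fderiv ℝ (fun y => v y σ) z + v z σ • fderiv ℝ (fun y => τ y σ) z)) w
          = (∑ σ, (τ z σ • fderiv ℝ (fun y => v y σ) z + v z σ • fderiv ℝ (fun y => τ y σ) z))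
            (∑ μ, w μ • (Pi.single μ 1 : Vec4)) := by rw [← hw]
        _ = ∑ μ, w μ • ((∑ σ, (τ z σ • fderiv ℝ (fun y => v y σ) z
              + v z σ • fderiv ℝ (fun y => τ y σ) z)) (Pi.single μ 1)) := by
            rw [map_sum]; simp
        _ = 0 := by simp [hL]
    have locconst : ∀ z ∈ U, ∀ᶠ w in nhds z, f w = f z := by
      intro z hz
      obtain ⟨ε, εpos, hball⟩ := Metric.isOpen_iff.1 hU z hz
      have hdiff : DifferentiableOn ℝ f (Metric.ball z ε) := fun w hw =>
        ((hfd w (hball hw)).differentiableAt).differentiableWithinAt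
      have hder : ∀ w ∈ Metric.ball z ε, fderivWithin ℝ f (Metric.ball z ε) w = 0 := by
        intro w hw
        rw [fderivWithin_of_isOpen Metric.isOpen_ball hw]
        exact fz w (hball hw)
      filter_upwards [Metric.ball_mem_nhds z εpos] with w hw using
        (convex_ball z ε).is_const_of_fderivWithin_eq_zero hdiff hder hw
          (Metric.mem_ball_self εpos)
    have hS : IsOpen {z | z ∈ U ∧ f z = f x} := by
      rw [isOpen_iff_mem_nhds]
      rintro z ⟨hzU, hzf⟩
      filter_upwards [locconst z hzU, hU.mem_nhds hzU] with w hw hwU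
      exact ⟨hwU, hw.trans hzf⟩
    have hT : IsOpen {z | z ∈ U ∧ f z ≠ f x} := by
      rw [isOpen_iff_mem_nhds]
      rintro z ⟨hzU, hzf⟩
      filter_upwards [locconst z hzU, hU.mem_nhds hzU] with w hw hwU
      exact ⟨hwU, by rw [hw]; exact hzf⟩
    by_contra hne'
    have hyT : y ∈ {z | z ∈ U ∧ f z ≠ f x} := ⟨hy, fun hh => hne' hh.symm⟩
    obtain ⟨z, hzU, ⟨_, hz1⟩, ⟨_, hz2⟩⟩ := hconn.isPreconnected _ _ hS hT
      (fun z hz => by by_cases hc : f z = f x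
                      · exact Or.inl ⟨hz, hc⟩
                      · exact Or.inr ⟨hz, hc⟩)
      ⟨x, hx, hx, rfl⟩ ⟨y, hy, hyT⟩
    exact hz2 hz1
end
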